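/- arXiv:2502.00294 — 2 statements merged into one kernel-verified Lean document; each statement's English description precedes it below -/
import Mathlib

section
/- Let p be a probability mass function on {0,1}×{0,1} with p(0,0)·p(1,1) ≤ p(0,1)·p(1,0). Then there exist λ ∈ [0,1] and probability mass functions Q₀, Q₁ on {0,1}×{0,1} such that p = λ·Q₀ + (1−λ)·Q₁, under each Qₜ (t ∈ {0,1}) the two coordinates are independent, and Qₜ(0,0) = p(0,0) and Qₜ(1,1) = p(1,1) for t ∈ {0,1}. -/
set_option maxHeartbeats 1000000 in
/-- A pmf `p` on `{0,1}×{0,1}` with `p(0,0)·p(1,1) ≤ p(0,1)·p(1,0)` is a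
convex combination of two pmfs with independent coordinates, both of which agree with `p`
at `(0,0)` and `(1,1)`. -/
theorem stmt_5 (p : Fin 2 × Fin 2 → ℝ) (hp0 : ∀ a, 0 ≤ p a) (hp1 : ∑ a, p a = 1)
    (h : p (0, 0) * p (1, 1) ≤ p (0, 1) * p (1, 0)) :
    ∃ (l : ℝ) (Q : Fin 2 → (Fin 2 × Fin 2 → ℝ)),
      0 ≤ l ∧ l ≤ 1 ∧
      (∀ t, (∀ a, 0 ≤ Q t a) ∧ ∑ a, Q t a = 1) ∧
      (∀ a, p a = l * Q 0 a + (1 - l) * Q 1 a) ∧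
      (∀ t x y, Q t (x, y) = (∑ y', Q t (x, y')) * (∑ x', Q t (x', y))) ∧
      (∀ t, Q t (0, 0) = p (0, 0) ∧ Q t (1, 1) = p (1, 1)) := by
  set a := p (0, 0) with ha'
  set b := p (0, 1) with hb'
  set c := p (1, 0) with hc'
  set d := p (1, 1) with hd'
  have h0a : p 0 = a := rfl
  have h1d : p 1 = d := rfl
  have ha : 0 ≤ a := hp0 _
  have hb : 0 ≤ b := hp0 _
  have hc : 0 ≤ c := hp0 _
  have hd : 0 ≤ d := hp0 _
  have hsum : a + b + c + d = 1 := by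
    have h2 := hp1
    simp [Fintype.sum_prod_type, Fin.sum_univ_succ] at h2
    linarith [h2, h0a, h1d]
  have hDnn : 0 ≤ (b + c) ^ 2 - 4 * (a * d) := by nlinarith [sq_nonneg (b - c)]
  have hD : (b - c) ^ 2 ≤ (b + c) ^ 2 - 4 * (a * d) := by nlinarith
  set s := Real.sqrt ((b + c) ^ 2 - 4 * (a * d)) with hs'
  have hs0 : 0 ≤ s := Real.sqrt_nonneg _
  have hs2 : s ^ 2 = (b + c) ^ 2 - 4 * (a * d) := Real.sq_sqrt hDnn
  have habs : |b - c| ≤ s := by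
    rw [← Real.sqrt_sq_eq_abs]; exact Real.sqrt_le_sqrt hD
  have hbc1 : b - c ≤ s := le_trans (le_abs_self _) habs
  have hbc2 : c - b ≤ s := by
    have h2 : |c - b| ≤ s := by rwa [abs_sub_comm]
    exact le_trans (le_abs_self _) h2
  have hsle : s ≤ b + c := by
    have h2 : s ≤ Real.sqrt ((b + c) ^ 2) := Real.sqrt_le_sqrt (by nlinarith)
    rwa [Real.sqrt_sq (by linarith)] at h2
  clear_value s
  clear_value a b c d
  rcases eq_or_ne s 0 with hsz | hsz
  · -- degenerate case: p itself has independent coordinates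
    have heq : a * d = b * c := by nlinarith [hs2, hsz, hD, sq_nonneg (b - c)]
    refine ⟨1, ![p, p], by norm_num, le_refl 1, ?_, ?_, ?_, ?_⟩
    · intro t
      fin_cases t <;> exact ⟨hp0, hp1⟩
    · intro x; simp
    · intro t x y
      fin_cases t <;> fin_cases x <;> fin_cases y <;>
        simp [Fin.sum_univ_succ, h0a, h1d, ← ha', ← hb', ← hc', ← hd'] <;> nlinarith [hsum, heq]
    · intro t; fin_cases t <;> simp <;> exact ⟨h0a, h1d⟩
  · have hspos : 0 < s := lt_of_le_of_ne hs0 (Ne.symm hsz)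
    refine ⟨(b - c + s) / (2 * s),
      ![fun x => if x.1 = 0 then (if x.2 = 0 then a else (b + c + s) / 2)
                 else (if x.2 = 0 then (b + c - s) / 2 else d),
        fun x => if x.1 = 0 then (if x.2 = 0 then a else (b + c - s) / 2)
                 else (if x.2 = 0 then (b + c + s) / 2 else d)],
      ?_, ?_, ?_, ?_, ?_, ?_⟩
    · apply div_nonneg (by linarith) (by linarith)
    · rw [div_le_one (by linarith)]; linarith
    · intro t
      constructor
      · intro x
        fin_cases t <;> fin_cases x <;> simp <;> linarith
      · fin_cases t <;>
          · simp [Fintype.sum_prod_type, Fin.sum_univ_succ]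
            linarith
    · intro x
      fin_cases x <;> simp [h0a, h1d, ← ha', ← hb', ← hc', ← hd'] <;> field_simp <;> ring
    · intro t x y
      fin_cases t <;> fin_cases x <;> fin_cases y <;>
        simp [Fin.sum_univ_succ, h0a, h1d, ← ha', ← hb', ← hc', ← hd'] <;>
        first
        | linear_combination (-a) * hsum + (1/4 : ℝ) * hs2
        | linear_combination (-(b + c + s)/2) * hsum - (1/4 : ℝ) * hs2
        | linear_combination (-(b + c - s)/2) * hsum - (1/4 : ℝ) * hs2
        | linear_combination (-d) * hsum + (1/4 : ℝ) * hs2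
    · intro t; fin_cases t <;> simp [← ha', ← hd']
end

section
/- Let 𝒳, 𝒴 be finite sets, let P be a probability mass function on 𝒳×𝒴 with P(x,y) > 0 for all (x,y), and let a : 𝒳 → [0,∞) and b : 𝒴 → [0,∞) be functions such that Q(x,y) := a(x)·b(y)·P(x,y) defines a probability mass function on 𝒳×𝒴. Let g : 𝒳×𝒴 → 𝒵 be a function such that for each fixed y the map x ↦ g(x,y) is injective and for each fixed x the map y ↦ g(x,y) is injective. If g is Q-almost surely constant (i.e. there exists z₀ with Q({(x,y) : g(x,y) = z₀}) = 1), then Q is a point mass: there exists a single pair (x*,y*) with Q(x*,y*) = 1. -/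
/-- Let `P` be a strictly positive pmf on `𝒳 × 𝒴` and let
`Q(x,y) = a(x)·b(y)·P(x,y)` be a pmf, where `a, b ≥ 0`. If `g : 𝒳×𝒴 → 𝒵` is injective in
each coordinate separately and `g` is `Q`-almost surely equal to some fixed `z₀`, then `Q`
is a point mass. -/
theorem stmt_12 {𝒳 𝒴 𝒵 : Type*} [Fintype 𝒳] [Fintype 𝒴] [DecidableEq 𝒵]
    (P : 𝒳 × 𝒴 → ℝ) (hPpos : ∀ p, 0 < P p) (hP1 : ∑ p, P p = 1)
    (a : 𝒳 → ℝ) (b : 𝒴 → ℝ) (ha : ∀ x, 0 ≤ a x) (hb : ∀ y, 0 ≤ b y)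
    (hQ1 : ∑ p : 𝒳 × 𝒴, a p.1 * b p.2 * P p = 1)
    (g : 𝒳 × 𝒴 → 𝒵)
    (hg1 : ∀ y, Function.Injective fun x => g (x, y))
    (hg2 : ∀ x, Function.Injective fun y => g (x, y))
    (z₀ : 𝒵)
    (hconst : ∑ p : 𝒳 × 𝒴, (if g p = z₀ then a p.1 * b p.2 * P p else 0) = 1) :
    ∃ p₀ : 𝒳 × 𝒴, a p₀.1 * b p₀.2 * P p₀ = 1 := by
  set Q : 𝒳 × 𝒴 → ℝ := fun p => a p.1 * b p.2 * P p with hQdef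
  have hQnn : ∀ p, 0 ≤ Q p := fun p =>
    mul_nonneg (mul_nonneg (ha _) (hb _)) (hPpos p).le
  -- off the set {g = z₀}, Q vanishes
  have hzero : ∀ p, g p ≠ z₀ → Q p = 0 := by
    intro p hp
    have hsum : ∑ q : 𝒳 × 𝒴, (Q q - if g q = z₀ then Q q else 0) = 0 := by
      rw [Finset.sum_sub_distrib, hQ1, hconst]; ring
    have hterm : ∀ q ∈ Finset.univ, (0:ℝ) ≤ Q q - if g q = z₀ then Q q else 0 := by
      intro q _
      by_cases h : g q = z₀ <;> simp [h, hQnn q]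
    have := (Finset.sum_eq_zero_iff_of_nonneg hterm).1 hsum p (Finset.mem_univ p)
    simpa [hp] using this
  -- there exists a point with positive Q
  obtain ⟨p₀, -, hp₀⟩ : ∃ p ∈ Finset.univ, 0 < Q p := by
    by_contra h
    push_neg at h
    have : ∑ p : 𝒳 × 𝒴, Q p ≤ 0 := Finset.sum_nonpos fun p _ => h p (Finset.mem_univ p)
    rw [hQ1] at this; linarith
  have hp₀z : g p₀ = z₀ := by
    by_contra h
    rw [hzero p₀ h] at hp₀; exact lt_irrefl _ hp₀
  have ha₀ : 0 < a p₀.1 := by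
    rcases lt_or_eq_of_le (ha p₀.1) with h | h
    · exact h
    · exfalso; rw [hQdef] at hp₀; simp only at hp₀; rw [← h] at hp₀; simp at hp₀
  have hb₀ : 0 < b p₀.2 := by
    rcases lt_or_eq_of_le (hb p₀.2) with h | h
    · exact h
    · exfalso; rw [hQdef] at hp₀; simp only at hp₀; rw [← h] at hp₀; simp at hp₀
  -- Q is supported only at p₀
  have hsupp : ∀ q : 𝒳 × 𝒴, q ≠ p₀ → Q q = 0 := by
    intro q hq
    by_contra h
    have hQq : 0 < Q q := lt_of_le_of_ne (hQnn q) (Ne.symm h)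
    have haq : 0 < a q.1 := by
      by_contra h'
      push_neg at h'
      have : a q.1 = 0 := le_antisymm h' (ha q.1)
      rw [hQdef] at hQq; simp only at hQq; rw [this] at hQq; simp at hQq
    have hbq : 0 < b q.2 := by
      by_contra h'
      push_neg at h'
      have : b q.2 = 0 := le_antisymm h' (hb q.2)
      rw [hQdef] at hQq; simp only at hQq; rw [this] at hQq; simp at hQq
    have hgq : g q = z₀ := by
      by_contra h'
      rw [hzero q h'] at hQq; exact lt_irrefl _ hQq
    -- Q(q.1, p₀.2) > 0 hence g(q.1, p₀.2) = z₀
    have hmix1 : g (q.1, p₀.2) = z₀ := by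
      by_contra h'
      have := hzero (q.1, p₀.2) h'
      have hpos : 0 < Q (q.1, p₀.2) :=
        mul_pos (mul_pos haq hb₀) (hPpos _)
      rw [this] at hpos; exact lt_irrefl _ hpos
    have hmix2 : g (p₀.1, q.2) = z₀ := by
      by_contra h'
      have := hzero (p₀.1, q.2) h'
      have hpos : 0 < Q (p₀.1, q.2) :=
        mul_pos (mul_pos ha₀ hbq) (hPpos _)
      rw [this] at hpos; exact lt_irrefl _ hpos
    have hx : q.1 = p₀.1 := by
      apply hg1 p₀.2
      show g (q.1, p₀.2) = g (p₀.1, p₀.2)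
      rw [hmix1, ← hp₀z]
    have hy : q.2 = p₀.2 := by
      apply hg2 p₀.1
      show g (p₀.1, q.2) = g (p₀.1, p₀.2)
      rw [hmix2, ← hp₀z]
    exact hq (Prod.ext hx hy)
  refine ⟨p₀, ?_⟩
  have : ∑ p : 𝒳 × 𝒴, Q p = Q p₀ :=
    Finset.sum_eq_single_of_mem p₀ (Finset.mem_univ p₀) fun q _ hq => hsupp q hq
  show Q p₀ = 1
  rw [← this]; exact hQ1
end
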